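/- arXiv:2404.18786 — 3 statements merged into one kernel-verified Lean document; each statement's English description precedes it below -/
import Mathlib

section
/- Suppose Z is chosen uniformly at random among all binary vectors in {0,1}ⁿ with exactly n₁ ones, Yᵢ = yᵢ(dᵢ(Zᵢ)) and Dᵢ = dᵢ(Zᵢ) with dᵢ(1) ≥ dᵢ(0), and the set of compliers C = {i : dᵢ(0)=0, dᵢ(1)=1} is nonempty. If β̄ = (1/|C|)·Σ_{i∈C}(yᵢ(1) − yᵢ(0)) is the local average treatment effect, then the expectation of τ̂(β̄) = (1/n)·Σᵢ (Yᵢ − β̄Dᵢ)(Zᵢ − n₁/n) is zero. -/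
/-!
Each unit is treated in a fraction `p = n₁ / n` of the assignments, so the expected estimator is
`p (1 - p) / n` times the sum over units of the contrast between `Y - β̄ D` under treatment and
under control. Without defiers this contrast vanishes for always- and never-takers and equals
`yᵢ(1) - yᵢ(0) - β̄` for compliers, whose sum is zero by the choice of `β̄`.
-/

open Finset

section CompletelyRandomizedDesign

variable {ι : Type*} [Fintype ι] [DecidableEq ι]

theorem card_filter_mem_powersetCard_mul_card (i : ι) (k : ℕ) :
    #{s ∈ powersetCard k (univ : Finset ι) | i ∈ s} * Fintype.card ι
      = (Fintype.card ι).choose k * k := by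
  obtain ⟨m, hm⟩ := Nat.exists_eq_add_one.2 (Fintype.card_pos_iff.2 ⟨i⟩)
  cases k with
  | zero => simp
  | succ k =>
    have hcount : #{s ∈ powersetCard (k + 1) (univ : Finset ι) | i ∈ s} = m.choose k := by
      simpa [← singleton_subset_iff, hm] using
        card_filter_powersetCard_subset {i} univ (k + 1) (subset_univ _) (by simp)
    rw [hcount, hm, mul_comm, Nat.add_one_mul_choose_eq]

theorem sum_powersetCard_ite_mem {𝕜 : Type*} [Field 𝕜] [CharZero 𝕜] (i : ι) (k : ℕ) (u v : 𝕜) :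
    ∑ s ∈ powersetCard k (univ : Finset ι), (if i ∈ s then u else v)
      = (Fintype.card ι).choose k * (k / Fintype.card ι * u + (1 - k / Fintype.card ι) * v) := by
  have hcard : (Fintype.card ι : 𝕜) ≠ 0 := Nat.cast_ne_zero.2 (Fintype.card_pos_iff.2 ⟨i⟩).ne'
  have hmem : (#{s ∈ powersetCard k (univ : Finset ι) | i ∈ s} : 𝕜)
      = (Fintype.card ι).choose k * k / Fintype.card ι := by
    rw [eq_div_iff hcard]
    exact_mod_cast card_filter_mem_powersetCard_mul_card i k
  have hnot : (#{s ∈ powersetCard k (univ : Finset ι) | i ∉ s} : 𝕜)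
      = (Fintype.card ι).choose k - #{s ∈ powersetCard k (univ : Finset ι) | i ∈ s} := by
    rw [eq_sub_iff_add_eq', ← card_univ, ← card_powersetCard]
    exact_mod_cast card_filter_add_card_filter_not (fun s : Finset ι => i ∈ s)
  rw [sum_ite, sum_const, sum_const, nsmul_eq_mul, nsmul_eq_mul, hnot, hmem]
  field_simp

theorem sum_powersetCard_sum_ite_mul_sub {𝕜 : Type*} [Field 𝕜] [CharZero 𝕜] (k : ℕ)
    (a b : ι → 𝕜) :
    ∑ s ∈ powersetCard k (univ : Finset ι), ∑ i,
        (if i ∈ s then a i else b i) * ((if i ∈ s then 1 else 0) - k / Fintype.card ι)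
      = (Fintype.card ι).choose k * (k / Fintype.card ι) * (1 - k / Fintype.card ι)
          * ∑ i, (a i - b i) := by
  rw [sum_comm, mul_sum]
  refine sum_congr rfl fun i _ => ?_
  have hsplit : ∀ s : Finset ι,
      (if i ∈ s then a i else b i) * ((if i ∈ s then 1 else 0) - k / Fintype.card ι)
        = if i ∈ s then a i * (1 - k / Fintype.card ι) else b i * (0 - k / Fintype.card ι) :=
    fun s => by split_ifs <;> rfl
  rw [sum_congr rfl fun s _ => hsplit s, sum_powersetCard_ite_mem]
  ring

end CompletelyRandomizedDesign

theorem net_outcome_contrast {d0 d1 : ℕ} (hd0 : d0 ≤ 1) (hd1 : d1 ≤ 1) (hmono : d0 ≤ d1)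
    (y0 y1 β : ℝ) :
    (if d1 = 1 then y1 else y0) - β * d1 - ((if d0 = 1 then y1 else y0) - β * d0)
      = if d0 = 0 ∧ d1 = 1 then y1 - y0 - β else 0 := by
  interval_cases d0 <;> interval_cases d1 <;> norm_num
  ring

theorem stmt1_general (n n₁ : ℕ)
    (y0 y1 : Fin n → ℝ) (d0 d1 : Fin n → ℕ)
    (hd0 : ∀ i, d0 i ≤ 1) (hd1 : ∀ i, d1 i ≤ 1) (hmono : ∀ i, d0 i ≤ d1 i)
    (C : Finset (Fin n)) (hC : C = Finset.univ.filter (fun i => d0 i = 0 ∧ d1 i = 1))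
    (hCne : C.Nonempty)
    (β : ℝ) (hβ : β = (1 / (C.card : ℝ)) * ∑ i ∈ C, (y1 i - y0 i)) :
    (1 / (n.choose n₁) : ℝ) *
      ∑ s ∈ Finset.powersetCard n₁ (Finset.univ : Finset (Fin n)),
        ((1 / (n : ℝ)) * ∑ i,
          (((if i ∈ s then (if d1 i = 1 then y1 i else y0 i)
              else (if d0 i = 1 then y1 i else y0 i))
            - β * (if i ∈ s then (d1 i : ℝ) else (d0 i : ℝ)))
          * ((if i ∈ s then (1 : ℝ) else 0) - (n₁ : ℝ) / n))) = 0 := by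
  have hcontrast : ∑ i, ((if d1 i = 1 then y1 i else y0 i) - β * d1 i
      - ((if d0 i = 1 then y1 i else y0 i) - β * d0 i)) = 0 := by
    have hcard : (#C : ℝ) ≠ 0 := Nat.cast_ne_zero.2 hCne.card_ne_zero
    simp only [net_outcome_contrast (hd0 _) (hd1 _) (hmono _), ← sum_filter, ← hC,
      sum_sub_distrib, sum_const, nsmul_eq_mul, hβ]
    field_simp
    ring
  have hcov := sum_powersetCard_sum_ite_mul_sub n₁
    (fun i => (if d1 i = 1 then y1 i else y0 i) - β * d1 i)
    (fun i => (if d0 i = 1 then y1 i else y0 i) - β * d0 i)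
  rw [Fintype.card_fin, hcontrast, mul_zero] at hcov
  simp only [← mul_sum, mul_ite, ite_sub_ite, hcov, mul_zero]

theorem stmt1 (n n₁ : ℕ) (hn₁ : 1 ≤ n₁) (hn : n₁ ≤ n - 1) (hnpos : 0 < n)
    (y0 y1 : Fin n → ℝ) (d0 d1 : Fin n → ℕ)
    (hd0 : ∀ i, d0 i ≤ 1) (hd1 : ∀ i, d1 i ≤ 1) (hmono : ∀ i, d0 i ≤ d1 i)
    (C : Finset (Fin n)) (hC : C = Finset.univ.filter (fun i => d0 i = 0 ∧ d1 i = 1))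
    (hCne : C.Nonempty)
    (β : ℝ) (hβ : β = (1 / (C.card : ℝ)) * ∑ i ∈ C, (y1 i - y0 i)) :
    (1 / (n.choose n₁) : ℝ) *
      ∑ s ∈ Finset.powersetCard n₁ (Finset.univ : Finset (Fin n)),
        ((1 / (n : ℝ)) * ∑ i,
          (((if i ∈ s then (if d1 i = 1 then y1 i else y0 i)
              else (if d0 i = 1 then y1 i else y0 i))
            - β * (if i ∈ s then (d1 i : ℝ) else (d0 i : ℝ)))
          * ((if i ∈ s then (1 : ℝ) else 0) - (n₁ : ℝ) / n))) = 0 :=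
  stmt1_general n n₁ y0 y1 d0 d1 hd0 hd1 hmono C hC hCne β hβ
end

section
/- Under the negative-correlation condition on complier adjusted potential outcomes (Assumption (i): complier covariance of w(1), w(0) is at least −δ times the product of complier standard deviations, δ ∈ (0,1)) and with w_i(1) = w_i(0) for all non-compliers, the variance of the centered AR statistic at the true LATE satisfies Var(τ̂(β)) ≥ (1−δ)·( (n₀/(n·n₁))·S₁²(β) + (n₁/(n·n₀))·S₀²(β) ), where Var(τ̂(β)) = S₁²(β)/n₁ + S₀²(β)/n₀ − S₁₀²(β)/n, S_a²(β) = (π²(1−π)²/(n−1))·Σᵢ vᵢ(a,β)², S₁₀²(β) = (π²(1−π)²/(n−1))·Σᵢ(vᵢ(1,β) − vᵢ(0,β))², and vᵢ(a,β) is the centered adjusted potential outcome. -/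
/-!
At the true LATE the adjusted outcomes `w₁, w₀` differ only on compliers and have equal
complier means, so `∑ (v₁ - v₀)² = A + B - 2·cov` with `A, B, cov` the complier (co)variation
sums. Each complier sum of squares is at most the corresponding full centered sum of squares, and
the negative-correlation condition together with AM-GM, `2√A√B ≤ r A + r⁻¹ B` for `r = n₀ / n₁`,
bounds `S₁₀²` by `S₁² + S₀² + δ (r S₁² + r⁻¹ S₀²)`. Since `1 / n₁ = n₀ / (n n₁) + 1 / n`, this is
exactly the claimed bound on the Neyman variance.
-/

open Finset

theorem two_mul_le_mul_sq_add_inv_mul_sq {r : ℝ} (hr : 0 < r) (x y : ℝ) :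
    2 * x * y ≤ r * x ^ 2 + r⁻¹ * y ^ 2 := by
  have h : r * x ^ 2 + r⁻¹ * y ^ 2 - 2 * x * y = r⁻¹ * (r * x - y) ^ 2 := by
    field_simp; ring
  have := mul_nonneg (inv_nonneg.mpr hr.le) (sq_nonneg (r * x - y))
  linarith

theorem add_sub_two_mul_le_of_ge_neg_mul_sqrt {A B P₁ P₀ X δ r : ℝ} (hδ : 0 ≤ δ) (hr : 0 < r)
    (hA₀ : 0 ≤ A) (hB₀ : 0 ≤ B) (hA : A ≤ P₁) (hB : B ≤ P₀) (hX : X ≥ -δ * √A * √B) :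
    A + B - 2 * X ≤ P₁ + P₀ + δ * (r * P₁ + r⁻¹ * P₀) := by
  have hAMGM := two_mul_le_mul_sq_add_inv_mul_sq hr √A √B
  rw [Real.sq_sqrt hA₀, Real.sq_sqrt hB₀] at hAMGM
  have hP : r * A + r⁻¹ * B ≤ r * P₁ + r⁻¹ * P₀ := by gcongr
  nlinarith [mul_le_mul_of_nonneg_left hAMGM hδ, mul_le_mul_of_nonneg_left hP hδ]

section
variable {ι : Type*}

theorem sum_sq_sub_mean_le (s : Finset ι) (x : ι → ℝ) (t : ℝ) :
    ∑ i ∈ s, (x i - 1 / (#s : ℝ) * ∑ j ∈ s, x j) ^ 2 ≤ ∑ i ∈ s, (x i - t) ^ 2 := by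
  rcases s.eq_empty_or_nonempty with rfl | hs
  · simp
  have hsum : ∑ j ∈ s, x j = #s * (1 / (#s : ℝ) * ∑ j ∈ s, x j) := by
    have : (#s : ℝ) ≠ 0 := by exact_mod_cast hs.card_pos.ne'
    field_simp
  generalize 1 / (#s : ℝ) * ∑ j ∈ s, x j = m at hsum ⊢
  have hsplit : ∑ i ∈ s, (x i - t) ^ 2 = ∑ i ∈ s, (x i - m) ^ 2 + #s * (m - t) ^ 2 := by
    have h : ∀ i ∈ s, (x i - t) ^ 2 = (x i - m) ^ 2 + 2 * (m - t) * x i - (m ^ 2 - t ^ 2) :=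
      fun i _ => by ring
    rw [sum_congr rfl h, sum_sub_distrib, sum_add_distrib, ← mul_sum, hsum, sum_const,
      nsmul_eq_mul]
    ring
  rw [hsplit]
  have : 0 ≤ (#s : ℝ) * (m - t) ^ 2 := by positivity
  linarith

theorem sum_sub_mul_sub_ge_of_sampleCov_ge (s : Finset ι) (x y : ι → ℝ) (δ mx my : ℝ)
    (hmx : mx = 1 / (#s : ℝ) * ∑ i ∈ s, x i)
    (h : 1 / ((#s : ℝ) - 1) * ∑ i ∈ s, (x i - mx) * (y i - my) ≥
      -δ * √(1 / ((#s : ℝ) - 1) * ∑ i ∈ s, (x i - mx) ^ 2)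
        * √(1 / ((#s : ℝ) - 1) * ∑ i ∈ s, (y i - my) ^ 2)) :
    ∑ i ∈ s, (x i - mx) * (y i - my) ≥
      -δ * √(∑ i ∈ s, (x i - mx) ^ 2) * √(∑ i ∈ s, (y i - my) ^ 2) := by
  rcases le_or_gt #s 1 with hs | hs
  -- For `#s ≤ 1` the normalizer `1 / (#s - 1)` is meaningless and `h` says nothing, but both
  -- sides of the goal vanish.
  · rcases s.eq_empty_or_nonempty with rfl | ⟨a, ha⟩
    · simp
    obtain rfl : s = {a} :=
      eq_singleton_iff_unique_mem.mpr ⟨ha, fun b hb => card_le_one.mp hs b hb a ha⟩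
    simp [hmx]
  · have hk : 0 < 1 / ((#s : ℝ) - 1) := by
      have : (2 : ℝ) ≤ #s := by exact_mod_cast hs
      apply div_pos one_pos; linarith
    rw [Real.sqrt_mul hk.le, Real.sqrt_mul hk.le] at h
    generalize 1 / ((#s : ℝ) - 1) = k at hk h
    have hrhs : -δ * (√k * √(∑ i ∈ s, (x i - mx) ^ 2)) * (√k * √(∑ i ∈ s, (y i - my) ^ 2)) =
        k * (-δ * √(∑ i ∈ s, (x i - mx) ^ 2) * √(∑ i ∈ s, (y i - my) ^ 2)) := by
      linear_combination (-δ * √(∑ i ∈ s, (x i - mx) ^ 2) * √(∑ i ∈ s, (y i - my) ^ 2)) *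
        Real.mul_self_sqrt hk.le
    rw [hrhs] at h
    exact le_of_mul_le_mul_left h hk

variable [Fintype ι]

theorem sum_sq_sub_mean_le_sum_sq_sub (s : Finset ι) (x : ι → ℝ) (t : ℝ) :
    ∑ i ∈ s, (x i - 1 / (#s : ℝ) * ∑ j ∈ s, x j) ^ 2 ≤ ∑ i, (x i - t) ^ 2 :=
  (sum_sq_sub_mean_le s x t).trans <|
    sum_le_sum_of_subset_of_nonneg (subset_univ s) fun _ _ _ => sq_nonneg _

theorem sum_eq_sum_of_eq_off (C : Finset ι) (w1 w0 : ι → ℝ) (hnonC : ∀ i ∉ C, w1 i = w0 i)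
    (hsumC : ∑ i ∈ C, (w1 i - w0 i) = 0) : ∑ i, w1 i = ∑ i, w0 i := by
  have h : ∑ i ∈ C, (w1 i - w0 i) = ∑ i, (w1 i - w0 i) :=
    sum_subset (subset_univ C) fun i _ hi => by rw [hnonC i hi, sub_self]
  rw [← sub_eq_zero, ← sum_sub_distrib, ← h, hsumC]

theorem sum_sq_sub_eq_of_eq_off (C : Finset ι) (w1 w0 : ι → ℝ)
    (hnonC : ∀ i ∉ C, w1 i = w0 i) (hsumC : ∑ i ∈ C, (w1 i - w0 i) = 0) (μ1 μ0 : ℝ)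
    (hμ1 : μ1 = 1 / (#C : ℝ) * ∑ i ∈ C, w1 i) (hμ0 : μ0 = 1 / (#C : ℝ) * ∑ i ∈ C, w0 i) :
    ∑ i, (w1 i - w0 i) ^ 2 = ∑ i ∈ C, (w1 i - μ1) ^ 2 + ∑ i ∈ C, (w0 i - μ0) ^ 2
      - 2 * ∑ i ∈ C, (w1 i - μ1) * (w0 i - μ0) := by
  have hμ : μ1 = μ0 := by
    rw [hμ1, hμ0, ← sub_eq_zero, ← mul_sub, ← sum_sub_distrib, hsumC, mul_zero]
  have hsupp : ∑ i ∈ C, (w1 i - w0 i) ^ 2 = ∑ i, (w1 i - w0 i) ^ 2 :=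
    sum_subset (subset_univ C) fun i _ hi => by rw [hnonC i hi, sub_self, sq, mul_zero]
  rw [← hsupp, mul_sum, ← sum_add_distrib, ← sum_sub_distrib, hμ]
  exact sum_congr rfl fun i _ => by ring

end

theorem neyman_variance_ge_of_le {n₁ n₀ δ S1 S0 S10 : ℝ} (h₁ : 0 < n₁) (h₀ : 0 < n₀)
    (h : S10 ≤ S1 + S0 + δ * (n₀ / n₁ * S1 + n₁ / n₀ * S0)) :
    S1 / n₁ + S0 / n₀ - S10 / (n₁ + n₀) ≥
      (1 - δ) * (n₀ / ((n₁ + n₀) * n₁) * S1 + n₁ / ((n₁ + n₀) * n₀) * S0) := by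
  have heq : S1 / n₁ + S0 / n₀ - S10 / (n₁ + n₀) -
      (1 - δ) * (n₀ / ((n₁ + n₀) * n₁) * S1 + n₁ / ((n₁ + n₀) * n₀) * S0) =
      (S1 + S0 + δ * (n₀ / n₁ * S1 + n₁ / n₀ * S0) - S10) / (n₁ + n₀) := by
    field_simp; ring
  have : 0 ≤ (S1 + S0 + δ * (n₀ / n₁ * S1 + n₁ / n₀ * S0) - S10) / (n₁ + n₀) :=
    div_nonneg (by linarith) (by linarith)
  linarith

theorem stmt4_general (n n₁ : ℕ) (hn₁ : 1 ≤ n₁) (hn : n₁ ≤ n - 1)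
    (δ : ℝ) (hδ : δ ∈ Set.Ioo (0 : ℝ) 1)
    (C : Finset (Fin n))
    (w1 w0 : Fin n → ℝ)
    (hnonC : ∀ i ∉ C, w1 i = w0 i)
    (hsumC : ∑ i ∈ C, (w1 i - w0 i) = 0)
    (μ1C μ0C : ℝ)
    (hμ1C : μ1C = (1 / (C.card : ℝ)) * ∑ i ∈ C, w1 i)
    (hμ0C : μ0C = (1 / (C.card : ℝ)) * ∑ i ∈ C, w0 i)
    (hcov : (1 / ((C.card : ℝ) - 1)) * ∑ i ∈ C, (w1 i - μ1C) * (w0 i - μ0C) ≥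
      -δ * Real.sqrt ((1 / ((C.card : ℝ) - 1)) * ∑ i ∈ C, (w1 i - μ1C) ^ 2)
         * Real.sqrt ((1 / ((C.card : ℝ) - 1)) * ∑ i ∈ C, (w0 i - μ0C) ^ 2))
    (π : ℝ)
    (v1 v0 : Fin n → ℝ)
    (hv1 : ∀ i, v1 i = w1 i - (1 / (n : ℝ)) * ∑ j, w1 j)
    (hv0 : ∀ i, v0 i = w0 i - (1 / (n : ℝ)) * ∑ j, w0 j)
    (S1 S0 S10 : ℝ)
    (hS1 : S1 = (π ^ 2 * (1 - π) ^ 2 / ((n : ℝ) - 1)) * ∑ i, (v1 i) ^ 2)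
    (hS0 : S0 = (π ^ 2 * (1 - π) ^ 2 / ((n : ℝ) - 1)) * ∑ i, (v0 i) ^ 2)
    (hS10 : S10 = (π ^ 2 * (1 - π) ^ 2 / ((n : ℝ) - 1)) * ∑ i, (v1 i - v0 i) ^ 2) :
    S1 / (n₁ : ℝ) + S0 / ((n - n₁ : ℕ) : ℝ) - S10 / (n : ℝ) ≥
      (1 - δ) * (((n - n₁ : ℕ) : ℝ) / ((n : ℝ) * n₁) * S1 +
        (n₁ : ℝ) / ((n : ℝ) * ((n - n₁ : ℕ) : ℝ)) * S0) := by
  have hcov_sum := sum_sub_mul_sub_ge_of_sampleCov_ge C w1 w0 δ μ1C μ0C hμ1C hcov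
  have hA : ∑ i ∈ C, (w1 i - μ1C) ^ 2 ≤ ∑ i, v1 i ^ 2 := by
    simp only [hv1, hμ1C]; exact sum_sq_sub_mean_le_sum_sq_sub C w1 _
  have hB : ∑ i ∈ C, (w0 i - μ0C) ^ 2 ≤ ∑ i, v0 i ^ 2 := by
    simp only [hv0, hμ0C]; exact sum_sq_sub_mean_le_sum_sq_sub C w0 _
  have hdiff : ∑ i, (v1 i - v0 i) ^ 2 = ∑ i ∈ C, (w1 i - μ1C) ^ 2 + ∑ i ∈ C, (w0 i - μ0C) ^ 2
      - 2 * ∑ i ∈ C, (w1 i - μ1C) * (w0 i - μ0C) := by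
    simp only [hv1, hv0, sum_eq_sum_of_eq_off C w1 w0 hnonC hsumC, sub_sub_sub_cancel_right]
    exact sum_sq_sub_eq_of_eq_off C w1 w0 hnonC hsumC μ1C μ0C hμ1C hμ0C
  set N₁ : ℝ := (n₁ : ℝ)
  set N₀ : ℝ := ((n - n₁ : ℕ) : ℝ)
  have hN₁ : 0 < N₁ := by positivity
  have hN₀ : 0 < N₀ := by simp only [N₀]; exact_mod_cast (by omega : 0 < n - n₁)
  have hkey : ∑ i, (v1 i - v0 i) ^ 2 ≤ ∑ i, v1 i ^ 2 + ∑ i, v0 i ^ 2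
      + δ * (N₀ / N₁ * ∑ i, v1 i ^ 2 + N₁ / N₀ * ∑ i, v0 i ^ 2) := by
    rw [hdiff, ← inv_div N₀ N₁]
    exact add_sub_two_mul_le_of_ge_neg_mul_sqrt hδ.1.le (div_pos hN₀ hN₁)
      (sum_nonneg fun _ _ => sq_nonneg _) (sum_nonneg fun _ _ => sq_nonneg _) hA hB hcov_sum
  have hc : 0 ≤ π ^ 2 * (1 - π) ^ 2 / ((n : ℝ) - 1) := by
    have : (1 : ℝ) ≤ n := by exact_mod_cast (by omega : 1 ≤ n)
    exact div_nonneg (by positivity) (by linarith)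
  have hn_eq : (n : ℝ) = N₁ + N₀ := by
    simp only [N₁, N₀]; rw [Nat.cast_sub (by omega)]; ring
  rw [hn_eq]
  refine neyman_variance_ge_of_le hN₁ hN₀ ?_
  rw [hS1, hS0, hS10]
  linear_combination mul_le_mul_of_nonneg_left hkey hc

theorem stmt4 (n n₁ : ℕ) (hn₁ : 1 ≤ n₁) (hn : n₁ ≤ n - 1) (hnpos : 2 ≤ n)
    (δ : ℝ) (hδ : δ ∈ Set.Ioo (0 : ℝ) 1)
    (C : Finset (Fin n)) (hCne : C.Nonempty)
    (w1 w0 : Fin n → ℝ)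
    (hnonC : ∀ i ∉ C, w1 i = w0 i)
    (hsumC : ∑ i ∈ C, (w1 i - w0 i) = 0)
    (μ1C μ0C : ℝ)
    (hμ1C : μ1C = (1 / (C.card : ℝ)) * ∑ i ∈ C, w1 i)
    (hμ0C : μ0C = (1 / (C.card : ℝ)) * ∑ i ∈ C, w0 i)
    (hcov : (1 / ((C.card : ℝ) - 1)) * ∑ i ∈ C, (w1 i - μ1C) * (w0 i - μ0C) ≥
      -δ * Real.sqrt ((1 / ((C.card : ℝ) - 1)) * ∑ i ∈ C, (w1 i - μ1C) ^ 2)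
         * Real.sqrt ((1 / ((C.card : ℝ) - 1)) * ∑ i ∈ C, (w0 i - μ0C) ^ 2))
    (π : ℝ) (hπ : π = (n₁ : ℝ) / n)
    (v1 v0 : Fin n → ℝ)
    (hv1 : ∀ i, v1 i = w1 i - (1 / (n : ℝ)) * ∑ j, w1 j)
    (hv0 : ∀ i, v0 i = w0 i - (1 / (n : ℝ)) * ∑ j, w0 j)
    (S1 S0 S10 : ℝ)
    (hS1 : S1 = (π ^ 2 * (1 - π) ^ 2 / ((n : ℝ) - 1)) * ∑ i, (v1 i) ^ 2)
    (hS0 : S0 = (π ^ 2 * (1 - π) ^ 2 / ((n : ℝ) - 1)) * ∑ i, (v0 i) ^ 2)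
    (hS10 : S10 = (π ^ 2 * (1 - π) ^ 2 / ((n : ℝ) - 1)) * ∑ i, (v1 i - v0 i) ^ 2) :
    S1 / (n₁ : ℝ) + S0 / ((n - n₁ : ℕ) : ℝ) - S10 / (n : ℝ) ≥
      (1 - δ) * (((n - n₁ : ℕ) : ℝ) / ((n : ℝ) * n₁) * S1 +
        (n₁ : ℝ) / ((n : ℝ) * ((n - n₁ : ℕ) : ℝ)) * S0) :=
  stmt4_general n n₁ hn₁ hn δ hδ C w1 w0 hnonC hsumC μ1C μ0C hμ1C hμ0C hcov π v1 v0 hv1 hv0 S1 S0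
    S10 hS1 hS0 hS10
end

section
/- Let Δ², Δ₁²,…, Δ_m² : ℝ → ℝ be continuous functions, α ∈ (0,1), and define η(β) = min{ Δ_k²(β) : #{s : Δ_s²(β) ≤ Δ_k²(β)} ≥ (1−α)m } and the index set I(β) = {k : Δ_k²(β) = η(β)}. Suppose on an open interval (β₁, β₂) no two distinct functions among Δ₁²,…,Δ_m² intersect (i.e., for distinct functions Δ_s² ≠ Δ_t² as functions, Δ_s²(β) ≠ Δ_t²(β) for all β in the interval). Then I(β) is constant on (β₁, β₂), and if β₁, β₂ are finite, I(β) ⊆ I(β₁) ∩ I(β₂) for all β ∈ (β₁, β₂). -/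
open Finset

theorem stmt7 (m : ℕ) (hm : 0 < m) (Δ : Fin m → ℝ → ℝ)
    (hcont : ∀ k, Continuous (Δ k)) (α : ℝ) (hα : α ∈ Set.Ioo (0 : ℝ) 1)
    (η : ℝ → ℝ)
    (hη : ∀ β, η β = sInf {y | ∃ k : Fin m, Δ k β = y ∧
      (1 - α) * m ≤ ((Finset.univ.filter (fun s => Δ s β ≤ Δ k β)).card : ℝ)})
    (I : ℝ → Set (Fin m)) (hI : ∀ β, I β = {k | Δ k β = η β})
    (β₁ β₂ : ℝ) (hlt : β₁ < β₂)
    (hsep : ∀ s t : Fin m, Δ s ≠ Δ t → ∀ β ∈ Set.Ioo β₁ β₂, Δ s β ≠ Δ t β) :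
    (∀ β ∈ Set.Ioo β₁ β₂, ∀ β' ∈ Set.Ioo β₁ β₂, I β = I β') ∧
    (∀ β ∈ Set.Ioo β₁ β₂, I β ⊆ I β₁ ∩ I β₂) := by
  obtain ⟨hα0, hα1⟩ := hα
  have hnem : Nonempty (Fin m) := ⟨⟨0, hm⟩⟩
  -- L1 : equality at an interior point implies equality of functions
  have L1 : ∀ s t : Fin m, ∀ β ∈ Set.Ioo β₁ β₂, Δ s β = Δ t β → Δ s = Δ t := by
    intro s t β hβ heq
    by_contra hne
    exact hsep s t hne β hβ heq
  -- L2 : strict inequality at one interior point propagates to all interior points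
  have L2 : ∀ s t : Fin m, ∀ β ∈ Set.Ioo β₁ β₂, ∀ β' ∈ Set.Ioo β₁ β₂,
      Δ s β < Δ t β → Δ s β' < Δ t β' := by
    intro s t β hβ β' hβ' hlt'
    have hne : Δ s ≠ Δ t := by
      intro h; rw [h] at hlt'; exact lt_irrefl _ hlt'
    rcases lt_or_ge (Δ s β') (Δ t β') with h | h
    · exact h
    have hgt : Δ t β' < Δ s β' :=
      lt_of_le_of_ne h (fun he => hsep s t hne β' hβ' he.symm)
    -- IVT contradiction
    set f : ℝ → ℝ := fun x => Δ t x - Δ s x with hf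
    have hfc : ContinuousOn f (Set.uIcc β β') := ((hcont t).sub (hcont s)).continuousOn
    have h0 : (0 : ℝ) ∈ Set.uIcc (f β) (f β') := by
      rw [Set.mem_uIcc]
      right
      constructor <;> simp [hf] <;> linarith
    obtain ⟨c, hc, hfc0⟩ := intermediate_value_uIcc hfc h0
    have hcJ : c ∈ Set.Ioo β₁ β₂ :=
      Set.ordConnected_Ioo.uIcc_subset hβ hβ' hc
    have : Δ s c = Δ t c := by
      have : Δ t c - Δ s c = 0 := hfc0
      linarith
    exact (hsep s t hne c hcJ this).elim
  -- L2' : non-strict inequality propagates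
  have L2' : ∀ s t : Fin m, ∀ β ∈ Set.Ioo β₁ β₂, ∀ β' ∈ Set.Ioo β₁ β₂,
      Δ s β ≤ Δ t β → Δ s β' ≤ Δ t β' := by
    intro s t β hβ β' hβ' hle
    by_contra hcon
    push_neg at hcon
    exact absurd ((L2 t s β' hβ' β hβ hcon)) (not_lt.mpr hle)
  -- L3 : strict inequality at an interior point gives ≤ on the closed interval
  have L3 : ∀ s t : Fin m, ∀ β ∈ Set.Ioo β₁ β₂, Δ s β < Δ t β →
      ∀ γ ∈ Set.Icc β₁ β₂, Δ s γ ≤ Δ t γ := by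
    intro s t β hβ hlt' γ hγ
    have hclosed : IsClosed {x | Δ s x ≤ Δ t x} := isClosed_le (hcont s) (hcont t)
    have hsub : Set.Ioo β₁ β₂ ⊆ {x | Δ s x ≤ Δ t x} := by
      intro x hx; exact (L2 s t β hβ x hx hlt').le
    have : closure (Set.Ioo β₁ β₂) ⊆ {x | Δ s x ≤ Δ t x} :=
      hclosed.closure_subset_iff.mpr hsub
    rw [closure_Ioo hlt.ne] at this
    exact this hγ
  -- L4 : strict inequality at an endpoint propagates into the open interval
  have L4 : ∀ γ, (γ = β₁ ∨ γ = β₂) → ∀ s t : Fin m, Δ s γ < Δ t γ →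
      ∀ β ∈ Set.Ioo β₁ β₂, Δ s β < Δ t β := by
    intro γ hγ s t hlt' β hβ
    have hne : Δ s ≠ Δ t := by
      intro h; rw [h] at hlt'; exact lt_irrefl _ hlt'
    rcases lt_or_ge (Δ s β) (Δ t β) with h | h
    · exact h
    have hgt : Δ t β < Δ s β :=
      lt_of_le_of_ne h (fun he => hsep s t hne β hβ he.symm)
    set f : ℝ → ℝ := fun x => Δ t x - Δ s x with hf
    have hfc : ContinuousOn f (Set.uIcc γ β) := ((hcont t).sub (hcont s)).continuousOn
    have h0 : (0 : ℝ) ∈ Set.uIcc (f γ) (f β) := by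
      rw [Set.mem_uIcc]
      right
      constructor <;> simp [hf] <;> linarith
    obtain ⟨c, hc, hfc0⟩ := intermediate_value_uIcc hfc h0
    have hcγ : c ≠ γ := by
      intro h
      rw [h] at hfc0
      simp only [hf] at hfc0
      linarith
    have hcJ : c ∈ Set.Ioo β₁ β₂ := by
      rcases hγ with rfl | rfl
      · rw [Set.uIcc_of_le hβ.1.le] at hc
        exact ⟨lt_of_le_of_ne hc.1 (Ne.symm hcγ), lt_of_le_of_lt hc.2 hβ.2⟩
      · rw [Set.uIcc_of_ge hβ.2.le] at hc
        exact ⟨lt_of_lt_of_le hβ.1 hc.1, lt_of_le_of_ne hc.2 hcγ⟩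
    have : Δ s c = Δ t c := by
      have : Δ t c - Δ s c = 0 := hfc0
      linarith
    exact (hsep s t hne c hcJ this).elim
  -- basic facts about the quantile set
  have hfin : ∀ β : ℝ, ({y | ∃ k : Fin m, Δ k β = y ∧
      (1 - α) * m ≤ ((Finset.univ.filter (fun s => Δ s β ≤ Δ k β)).card : ℝ)} : Set ℝ).Finite := by
    intro β
    apply Set.Finite.subset (Set.finite_range (fun k => Δ k β))
    rintro y ⟨k, hk, -⟩
    exact ⟨k, hk⟩
  have hYne : ∀ β : ℝ, ({y | ∃ k : Fin m, Δ k β = y ∧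
      (1 - α) * m ≤ ((Finset.univ.filter (fun s => Δ s β ≤ Δ k β)).card : ℝ)} : Set ℝ).Nonempty := by
    intro β
    obtain ⟨kmax, -, hkmax⟩ := Finset.exists_max_image Finset.univ (fun k => Δ k β)
      Finset.univ_nonempty
    refine ⟨Δ kmax β, kmax, rfl, ?_⟩
    have hfil : (Finset.univ.filter (fun s => Δ s β ≤ Δ kmax β)) = Finset.univ := by
      apply Finset.filter_true_of_mem
      intro x hx
      exact hkmax x hx
    rw [hfil]
    simp only [Finset.card_univ, Fintype.card_fin]
    have hm0 : (0 : ℝ) ≤ (m : ℝ) := Nat.cast_nonneg m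
    nlinarith
  have hmem : ∀ β : ℝ, ∃ k₀ : Fin m, Δ k₀ β = η β ∧
      (1 - α) * m ≤ ((Finset.univ.filter (fun s => Δ s β ≤ Δ k₀ β)).card : ℝ) := by
    intro β
    have := (hYne β).csInf_mem (hfin β)
    rw [← hη β] at this
    exact this
  have hlb : ∀ β : ℝ, ∀ j : Fin m,
      (1 - α) * m ≤ ((Finset.univ.filter (fun s => Δ s β ≤ Δ j β)).card : ℝ) →
      η β ≤ Δ j β := by
    intro β j hj
    rw [hη β]
    exact csInf_le (hfin β).bddBelow ⟨j, rfl, hj⟩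
  -- the condition transfers between interior points
  have Ctrans : ∀ β ∈ Set.Ioo β₁ β₂, ∀ β' ∈ Set.Ioo β₁ β₂, ∀ k : Fin m,
      (1 - α) * m ≤ ((Finset.univ.filter (fun s => Δ s β ≤ Δ k β)).card : ℝ) →
      (1 - α) * m ≤ ((Finset.univ.filter (fun s => Δ s β' ≤ Δ k β')).card : ℝ) := by
    intro β hβ β' hβ' k hk
    have : (Finset.univ.filter (fun s => Δ s β ≤ Δ k β)) =
        (Finset.univ.filter (fun s => Δ s β' ≤ Δ k β')) := by
      apply Finset.filter_congr
      intro s _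
      exact ⟨fun h => L2' s k β hβ β' hβ' h, fun h => L2' s k β' hβ' β hβ h⟩
    rwa [this] at hk
  -- the minimizer at one interior point computes η at every interior point
  have etaEq : ∀ β ∈ Set.Ioo β₁ β₂, ∀ β' ∈ Set.Ioo β₁ β₂, ∀ k₀ : Fin m,
      Δ k₀ β = η β →
      (1 - α) * m ≤ ((Finset.univ.filter (fun s => Δ s β ≤ Δ k₀ β)).card : ℝ) →
      η β' = Δ k₀ β' := by
    intro β hβ β' hβ' k₀ hval hcond
    apply le_antisymm
    · rw [hη β']
      exact csInf_le (hfin β').bddBelow ⟨k₀, rfl, Ctrans β hβ β' hβ' k₀ hcond⟩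
    · rw [hη β']
      apply le_csInf (hYne β')
      rintro y ⟨j, rfl, hj⟩
      have hjβ := Ctrans β' hβ' β hβ j hj
      have hle : Δ k₀ β ≤ Δ j β := hval ▸ hlb β j hjβ
      rcases eq_or_lt_of_le hle with heq | hltv
      · rw [L1 k₀ j β hβ heq]
      · exact (L2 k₀ j β hβ β' hβ' hltv).le
  -- η at an endpoint equals the value of the interior minimizer
  have etaEnd : ∀ γ, (γ = β₁ ∨ γ = β₂) → ∀ β ∈ Set.Ioo β₁ β₂, ∀ k₀ : Fin m,
      Δ k₀ β = η β →
      (1 - α) * m ≤ ((Finset.univ.filter (fun s => Δ s β ≤ Δ k₀ β)).card : ℝ) →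
      η γ = Δ k₀ γ := by
    intro γ hγ β hβ k₀ hval hcond
    apply le_antisymm
    · -- η γ ≤ Δ k₀ γ
      rw [hη γ]
      apply csInf_le (hfin γ).bddBelow
      refine ⟨k₀, rfl, ?_⟩
      have hγIcc : γ ∈ Set.Icc β₁ β₂ := by
        rcases hγ with rfl | rfl
        · exact ⟨le_refl _, hlt.le⟩
        · exact ⟨hlt.le, le_refl _⟩
      have hsub : (Finset.univ.filter (fun s => Δ s β ≤ Δ k₀ β)) ⊆
          (Finset.univ.filter (fun s => Δ s γ ≤ Δ k₀ γ)) := by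
        intro s hs
        rw [Finset.mem_filter] at hs ⊢
        refine ⟨Finset.mem_univ s, ?_⟩
        rcases eq_or_lt_of_le hs.2 with heq | hltv
        · rw [L1 s k₀ β hβ heq]
        · exact L3 s k₀ β hβ hltv γ hγIcc
      calc (1 - α) * m ≤ ((Finset.univ.filter (fun s => Δ s β ≤ Δ k₀ β)).card : ℝ) := hcond
        _ ≤ _ := by exact_mod_cast Finset.card_le_card hsub
    · -- Δ k₀ γ ≤ η γ
      rw [hη γ]
      apply le_csInf (hYne γ)
      rintro y ⟨j, rfl, hj⟩
      by_contra hcon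
      push_neg at hcon
      -- hcon : Δ j γ < Δ k₀ γ
      set T : Finset (Fin m) := Finset.univ.filter (fun s => Δ s γ = Δ j γ) with hT
      have hjT : j ∈ T := by
        rw [hT, Finset.mem_filter]
        exact ⟨Finset.mem_univ j, rfl⟩
      obtain ⟨j', hj'T, hj'max⟩ := Finset.exists_max_image T (fun s => Δ s β) ⟨j, hjT⟩
      have hj'γ : Δ j' γ = Δ j γ := by
        rw [hT, Finset.mem_filter] at hj'T
        exact hj'T.2
      -- the condition holds for j' at β
      have hCj' : (1 - α) * m ≤ ((Finset.univ.filter (fun s => Δ s β ≤ Δ j' β)).card : ℝ) := by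
        have hsub : (Finset.univ.filter (fun s => Δ s γ ≤ Δ j γ)) ⊆
            (Finset.univ.filter (fun s => Δ s β ≤ Δ j' β)) := by
          intro s hs
          rw [Finset.mem_filter] at hs ⊢
          refine ⟨Finset.mem_univ s, ?_⟩
          rcases eq_or_lt_of_le hs.2 with heq | hltv
          · have hsT : s ∈ T := by
              rw [hT, Finset.mem_filter]
              exact ⟨Finset.mem_univ s, heq⟩
            exact hj'max s hsT
          · have : Δ s γ < Δ j' γ := hj'γ ▸ hltv
            exact (L4 γ hγ s j' this β hβ).le
        calc (1 - α) * m ≤ ((Finset.univ.filter (fun s => Δ s γ ≤ Δ j γ)).card : ℝ) := hj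
          _ ≤ _ := by exact_mod_cast Finset.card_le_card hsub
      have h1 : Δ k₀ β ≤ Δ j' β := hval ▸ hlb β j' hCj'
      have h2 : Δ j' β < Δ k₀ β := by
        apply L4 γ hγ j' k₀ _ β hβ
        rw [hj'γ]; exact hcon
      linarith
  constructor
  · -- constancy on the open interval
    intro β hβ β' hβ'
    obtain ⟨k₀, hval, hcond⟩ := hmem β
    have hval' : η β' = Δ k₀ β' := etaEq β hβ β' hβ' k₀ hval hcond
    ext k
    rw [hI β, hI β']
    simp only [Set.mem_setOf_eq]
    constructor
    · intro hk
      have : Δ k β = Δ k₀ β := by rw [hk, ← hval]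
      rw [L1 k k₀ β hβ this, hval']
    · intro hk
      have : Δ k β' = Δ k₀ β' := by rw [hk, hval']
      rw [L1 k k₀ β' hβ' this, ← hval]
  · -- inclusion into the endpoint sets
    intro β hβ k hk
    obtain ⟨k₀, hval, hcond⟩ := hmem β
    rw [hI β] at hk
    have hkk₀ : Δ k = Δ k₀ := by
      apply L1 k k₀ β hβ
      rw [Set.mem_setOf_eq] at hk
      rw [hk, ← hval]
    constructor
    · rw [hI β₁, Set.mem_setOf_eq, hkk₀, etaEnd β₁ (Or.inl rfl) β hβ k₀ hval hcond]
    · rw [hI β₂, Set.mem_setOf_eq, hkk₀, etaEnd β₂ (Or.inr rfl) β hβ k₀ hval hcond]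
end
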